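/- Fix d ≥ 2 and r ∈ (0, 1/2), C > 0. Define K̄_{r,C} ⊂ SL_d(ℝ) as the set of g = (g_{ij}) with: 1 − r ≤ g_{ii} ≤ 1 + C·r for all i; |g_{ij}| < 1 and |g_{ij}·g_{ji}| ≤ C·r for all i ≠ j; and |det(g̃) − 1| < 1/2 where g̃ is the top-left (d−1)×(d−1) block. Then the Haar measure of K̄_{r,C} is ≪_{d,C} r^{κ_d + 1} · (log(1/r))^{λ_d}, where κ_d = (d² + d − 4)/2 and λ_d = d(d−1)/2. -/

import Mathlib

open Set MeasureTheory

def Kbar (n : ℕ) (r C : ℝ) : Set (Matrix (Fin (n + 1)) (Fin (n + 1)) ℝ) :=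
  {g | g.det = 1 ∧
    (∀ i, 1 - r ≤ g i i ∧ g i i ≤ 1 + C * r) ∧
    (∀ i j : Fin (n + 1), i ≠ j → |g i j| < 1 ∧ |g i j * g j i| ≤ C * r) ∧
    |(Matrix.of fun i j : Fin n => g i.castSucc j.castSucc).det - 1| < 1 / 2}

/-- The coordinate chart on `SL_{n+1}(ℝ)` (near matrices with `det g̃ ≈ 1`) recording all
matrix entries except the `(d,d)` entry.  By the explicit description of Haar measure on
`SL_d(ℝ)` in these coordinates, on the region `|det g̃ - 1| < 1/2` the Haar measure of a set
is comparable (up to constants depending only on `d`) to the Lebesgue measure of its image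
under this chart. -/
def slChart (n : ℕ) (g : Matrix (Fin (n + 1)) (Fin (n + 1)) ℝ)
    (p : {q : Fin (n + 1) × Fin (n + 1) // q ≠ (Fin.last n, Fin.last n)}) : ℝ :=
  g p.1.1 p.1.2

/-!
In the chart, the image of `K̄_{r,C}` (with `d = n + 1`) has its `n` free diagonal coordinates
in an interval of length `(1 + C) r`, and each of the `d(d-1)/2` pairs `(g_{ij}, g_{ji})`,
`i < j`, in the hyperbolic cross `{|x|, |y| ≤ 1, |xy| ≤ Cr}`. Covering the cross by the dyadic
boxes `|x| ≤ 2^{-k}`, `|y| ≤ 2^{k+1} C r` for `k ≤ log₂ (1 / (Cr))`, each of area `8 C r`, bounds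
its area by `≪_C r log (1 / r)`, and the volume of the image by the product of these bounds.
-/

open Metric Real

theorem volume_le_pow_mul_pow_of_pair_coords {α ι δ κ : Type*} [MeasureSpace α]
    [SigmaFinite (volume : Measure α)] [Fintype ι] [Fintype δ] [Fintype κ]
    (e : δ ⊕ (κ ⊕ κ) ≃ ι) {s : Set (ι → α)} {I : Set α} {P : Set (α × α)}
    (hs : ∀ v ∈ s, (∀ i, v (e (.inl i)) ∈ I) ∧
      ∀ k, (v (e (.inr (.inl k))), v (e (.inr (.inr k)))) ∈ P) :
    volume s ≤ volume I ^ Fintype.card δ * volume P ^ Fintype.card κ := by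
  let Φ : (ι → α) ≃ᵐ (δ → α) × (κ → α × α) :=
    ((MeasurableEquiv.piCongrLeft (fun _ => α) e).symm.trans
      (MeasurableEquiv.sumPiEquivProdPi fun _ => α)).trans
      (MeasurableEquiv.prodCongr (MeasurableEquiv.refl _)
        ((MeasurableEquiv.sumPiEquivProdPi fun _ => α).trans
          (MeasurableEquiv.arrowProdEquivProdArrow α α κ).symm))
  have hΦ : MeasurePreserving Φ volume volume :=
    ((MeasurePreserving.id volume).prod
      ((volume_measurePreserving_arrowProdEquivProdArrow α α κ).symm.comp
        (volume_measurePreserving_sumPiEquivProdPi fun _ => α))).comp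
      ((volume_measurePreserving_sumPiEquivProdPi fun _ => α).comp
        (volume_measurePreserving_piCongrLeft (fun _ => α) e).symm)
  have hsub : s ⊆ Φ ⁻¹' (univ.pi (fun _ => I) ×ˢ univ.pi (fun _ => P)) := fun v hv =>
    ⟨fun i _ => (hs v hv).1 i, fun k _ => (hs v hv).2 k⟩
  calc volume s ≤ volume (Φ ⁻¹' (univ.pi (fun _ => I) ×ˢ univ.pi (fun _ => P))) :=
        measure_mono hsub
    _ = volume I ^ Fintype.card δ * volume P ^ Fintype.card κ := by
        rw [hΦ.measure_preimage_equiv, Measure.volume_eq_prod, Measure.prod_prod,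
          volume_pi_pi, volume_pi_pi, Finset.prod_const, Finset.prod_const, Finset.card_univ,
          Finset.card_univ]

def hyperbolicCross (a : ℝ) : Set (ℝ × ℝ) := {p | |p.1| ≤ 1 ∧ |p.2| ≤ 1 ∧ |p.1 * p.2| ≤ a}

theorem exists_abs_le_half_pow_and_abs_le_two_pow_mul {x y a : ℝ} {N : ℕ} (hx : |x| ≤ 1)
    (hy : |y| ≤ 1) (hxy : |x * y| ≤ a) (hN : 1 ≤ 2 ^ N * a) :
    ∃ k ≤ N, |x| ≤ (1 / 2) ^ k ∧ |y| ≤ 2 ^ (k + 1) * a := by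
  classical
  have ha : 0 < a := pos_of_mul_pos_right (one_pos.trans_le hN) (by positivity)
  have hyN : |y| ≤ 2 ^ (N + 1) * a := by
    grw [hy, hN, pow_succ]
    nlinarith [pow_pos (two_pos : (0 : ℝ) < 2) N]
  have hex : ∃ k, |y| ≤ 2 ^ (k + 1) * a := ⟨N, hyN⟩
  refine ⟨Nat.find hex, Nat.find_min' hex hyN, ?_, Nat.find_spec hex⟩
  rcases hk : Nat.find hex with _ | j
  · simpa using hx
  · -- by minimality `|y| > 2 ^ (j + 1) a`, so `|xy| ≤ a` forces `|x| ≤ 2 ^ -(j + 1)`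
    have hyj : 2 ^ (j + 1) * a < |y| := not_le.1 (Nat.find_min hex (hk ▸ j.lt_succ_self))
    have hxa : |x| * 2 ^ (j + 1) * a ≤ 1 * a := by
      rw [abs_mul] at hxy
      nlinarith [abs_nonneg x]
    rw [div_pow, one_pow, le_div_iff₀ (by positivity)]
    exact le_of_mul_le_mul_right hxa ha

theorem hyperbolicCross_subset_biUnion {a : ℝ} {N : ℕ} (hN : 1 ≤ 2 ^ N * a) :
    hyperbolicCross a ⊆ ⋃ k ∈ Finset.range (N + 1),
      closedBall (0 : ℝ) ((1 / 2) ^ k) ×ˢ closedBall (0 : ℝ) (2 ^ (k + 1) * a) := by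
  rintro ⟨x, y⟩ ⟨hx, hy, hxy⟩
  obtain ⟨k, hkN, hxk, hyk⟩ := exists_abs_le_half_pow_and_abs_le_two_pow_mul hx hy hxy hN
  simp only [mem_iUnion, Finset.mem_range]
  exact ⟨k, Nat.lt_succ_of_le hkN, by simpa using hxk, by simpa using hyk⟩

theorem volume_hyperbolicCross_le_of_one_le {a : ℝ} {N : ℕ} (hN : 1 ≤ 2 ^ N * a) :
    volume (hyperbolicCross a) ≤ ENNReal.ofReal (8 * a * (N + 1)) := by
  have ha : 0 ≤ a := (pos_of_mul_pos_right (one_pos.trans_le hN) (by positivity)).le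
  have hbox : ∀ k : ℕ,
      volume (closedBall (0 : ℝ) ((1 / 2) ^ k) ×ˢ closedBall (0 : ℝ) (2 ^ (k + 1) * a)) =
        ENNReal.ofReal (8 * a) := by
    intro k
    rw [Measure.volume_eq_prod, Measure.prod_prod, Real.volume_closedBall,
      Real.volume_closedBall, ← ENNReal.ofReal_mul (by positivity)]
    congr 1
    rw [pow_succ, div_pow, one_pow]
    field_simp
    ring
  calc volume (hyperbolicCross a)
      ≤ ∑ k ∈ Finset.range (N + 1),
          volume (closedBall (0 : ℝ) ((1 / 2) ^ k) ×ˢ closedBall (0 : ℝ) (2 ^ (k + 1) * a)) :=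
        (measure_mono (hyperbolicCross_subset_biUnion hN)).trans (measure_biUnion_finset_le _ _)
    _ = ENNReal.ofReal (8 * a * (N + 1)) := by
        rw [Finset.sum_congr rfl fun k _ => hbox k, Finset.sum_const, Finset.card_range,
          nsmul_eq_mul, mul_comm, ← ENNReal.ofReal_natCast, ← ENNReal.ofReal_mul (by positivity)]
        push_cast
        rfl

theorem exists_one_le_two_pow_mul {a : ℝ} (ha : 0 < a) :
    ∃ N : ℕ, 1 ≤ 2 ^ N * a ∧ N * log 2 ≤ log⁺ a⁻¹ + log 2 := by
  classical
  have hex : ∃ N : ℕ, a⁻¹ ≤ 2 ^ N :=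
    (pow_unbounded_of_one_lt a⁻¹ one_lt_two).imp fun _ => le_of_lt
  refine ⟨Nat.find hex, (inv_le_iff_one_le_mul₀ ha).1 (Nat.find_spec hex), ?_⟩
  rcases hk : Nat.find hex with _ | N
  · simp only [CharP.cast_eq_zero, zero_mul]
    linarith [posLog_nonneg (x := a⁻¹), log_pos one_lt_two]
  · have hN : (2 : ℝ) ^ N < a⁻¹ := not_le.1 (Nat.find_min hex (hk ▸ N.lt_succ_self))
    have hlog : N * log 2 < log a⁻¹ := by
      rw [← log_pow]
      exact log_lt_log (by positivity) hN
    push_cast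
    linarith [posLog_apply (x := a⁻¹) ▸ le_max_right 0 (log a⁻¹)]

theorem volume_hyperbolicCross_le {a : ℝ} (ha : 0 < a) :
    volume (hyperbolicCross a) ≤ ENNReal.ofReal (8 * a * (log⁺ a⁻¹ / log 2 + 2)) := by
  obtain ⟨N, hN, hNlog⟩ := exists_one_le_two_pow_mul ha
  refine (volume_hyperbolicCross_le_of_one_le hN).trans (ENNReal.ofReal_le_ofReal ?_)
  have hN' : (N : ℝ) ≤ log⁺ a⁻¹ / log 2 + 1 := by
    rw [div_add_one (log_pos one_lt_two).ne', le_div_iff₀ (log_pos one_lt_two)]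
    exact hNlog
  exact mul_le_mul_of_nonneg_left (by linarith) (by positivity)

theorem posLog_inv_mul_div_log_two_add_two_le {C r : ℝ} (hr : 0 < r) (hr2 : r ≤ 1 / 2) :
    log⁺ (C * r)⁻¹ / log 2 + 2 ≤ (log⁺ C⁻¹ / log 2 + 3) * (log (1 / r) / log 2) := by
  have hl2 : 0 < log 2 := log_pos one_lt_two
  have hr1 : 2 ≤ 1 / r := by rw [le_div_iff₀ hr]; linarith
  have ht : 1 ≤ log (1 / r) / log 2 := by
    rw [le_div_iff₀ hl2, one_mul]
    exact log_le_log two_pos hr1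
  have hsplit : log⁺ (C * r)⁻¹ ≤ log⁺ C⁻¹ + log (1 / r) :=
    calc log⁺ (C * r)⁻¹ = log⁺ (C⁻¹ * (1 / r)) := by rw [mul_inv, one_div]
      _ ≤ log⁺ C⁻¹ + log⁺ (1 / r) := posLog_mul
      _ = log⁺ C⁻¹ + log (1 / r) := by
        rw [posLog_eq_log (x := 1 / r) (by rw [abs_of_pos (by positivity)]; linarith)]
  have hA : 0 ≤ log⁺ C⁻¹ / log 2 := div_nonneg posLog_nonneg hl2.le
  calc log⁺ (C * r)⁻¹ / log 2 + 2 ≤ log⁺ C⁻¹ / log 2 + log (1 / r) / log 2 + 2 := by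
        rw [← add_div]
        gcongr
    _ ≤ (log⁺ C⁻¹ / log 2 + 3) * (log (1 / r) / log 2) := by nlinarith

theorem exists_volume_hyperbolicCross_mul_le {C : ℝ} (hC : 0 < C) :
    ∃ B > 0, ∀ r, 0 < r → r ≤ 1 / 2 →
      volume (hyperbolicCross (C * r)) ≤ ENNReal.ofReal (B * r * log (1 / r)) := by
  have hA : 0 ≤ log⁺ C⁻¹ := posLog_nonneg
  refine ⟨8 * C * ((log⁺ C⁻¹ / log 2 + 3) / log 2), by positivity, fun r hr hr2 => ?_⟩
  refine (volume_hyperbolicCross_le (by positivity)).trans (ENNReal.ofReal_le_ofReal ?_)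
  calc 8 * (C * r) * (log⁺ (C * r)⁻¹ / log 2 + 2)
      ≤ 8 * (C * r) * ((log⁺ C⁻¹ / log 2 + 3) * (log (1 / r) / log 2)) := by
        gcongr
        exact posLog_inv_mul_div_log_two_add_two_le hr hr2
    _ = 8 * C * ((log⁺ C⁻¹ / log 2 + 3) / log 2) * r * log (1 / r) := by ring

namespace Kbar

abbrev UpperIdx (n : ℕ) := {p : Fin (n + 1) × Fin (n + 1) // p.1 < p.2}

abbrev ChartIdx (n : ℕ) := {q : Fin (n + 1) × Fin (n + 1) // q ≠ (Fin.last n, Fin.last n)}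

def chartIdxOfSum (n : ℕ) : Fin n ⊕ (UpperIdx n ⊕ UpperIdx n) → ChartIdx n
  | .inl i =>
    ⟨(i.castSucc, i.castSucc), fun h => (Fin.castSucc_lt_last i).ne (congrArg Prod.fst h)⟩
  | .inr (.inl p) => ⟨p.1, fun h => by simpa [h] using p.2⟩
  | .inr (.inr p) => ⟨p.1.swap, fun h => by simpa [Prod.swap_eq_iff_eq_swap.1 h] using p.2⟩

theorem chartIdxOfSum_bijective (n : ℕ) : Function.Bijective (chartIdxOfSum n) := by
  constructor
  · rintro (i | ⟨p, hp⟩ | ⟨p, hp⟩) (j | ⟨q, hq⟩ | ⟨q, hq⟩) h <;>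
      simp only [chartIdxOfSum, Subtype.mk.injEq, Prod.ext_iff, Prod.fst_swap, Prod.snd_swap,
        Fin.ext_iff, Fin.val_castSucc] at * <;>
      simp only [Sum.inl.injEq, Sum.inr.injEq, reduceCtorEq, Subtype.mk.injEq, Prod.ext_iff,
        Fin.ext_iff] <;>
      omega
  · rintro ⟨⟨i, j⟩, hq⟩
    rcases lt_trichotomy i j with h | rfl | h
    · exact ⟨.inr (.inl ⟨(i, j), h⟩), rfl⟩
    · have hi : i ≠ Fin.last n := fun hi => hq (by rw [hi])
      exact ⟨.inl (i.castPred hi), by simp [chartIdxOfSum]⟩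
    · exact ⟨.inr (.inr ⟨(j, i), h⟩), rfl⟩

theorem card_upperIdx (n : ℕ) : Fintype.card (UpperIdx n) = (n + 1) * n / 2 := by
  have h := Fintype.card_congr (Equiv.ofBijective _ (chartIdxOfSum_bijective n))
  simp only [Fintype.card_sum, Fintype.card_fin, Fintype.card_subtype_compl,
    Fintype.card_prod, Fintype.card_unique] at h
  have : (n + 1) * (n + 1) = (n + 1) * n + n + 1 := by ring
  omega

theorem volume_slChart_image_le (n : ℕ) (r C : ℝ) :
    volume (slChart n '' Kbar n r C) ≤
      ENNReal.ofReal ((1 + C) * r) ^ n *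
        volume (hyperbolicCross (C * r)) ^ ((n + 1) * n / 2) := by
  have h := volume_le_pow_mul_pow_of_pair_coords (Equiv.ofBijective _ (chartIdxOfSum_bijective n))
    (s := slChart n '' Kbar n r C) (I := Icc (1 - r) (1 + C * r)) (P := hyperbolicCross (C * r))
    (by
      rintro _ ⟨g, ⟨-, hdiag, hoff, -⟩, rfl⟩
      refine ⟨fun i => hdiag _, fun p => ?_⟩
      have hne := p.2.ne
      exact ⟨(hoff _ _ hne).1.le, (hoff _ _ hne.symm).1.le, (hoff _ _ hne).2⟩)
  rw [Fintype.card_fin, card_upperIdx, Real.volume_Icc] at h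
  convert h using 4
  ring

end Kbar

theorem sq_add_sub_four_div_two_add_one {n : ℕ} (hn : 1 ≤ n) :
    ((n + 1) ^ 2 + (n + 1) - 4) / 2 + 1 = n + (n + 1) * n / 2 := by
  have : (n + 1) ^ 2 + (n + 1) = (n + 1) * n + 2 * (n + 1) := by ring
  omega

/-- Haar-measure bound for `K̄_{r,C}`, expressed via the coordinate chart in which Haar
measure on `SL_{n+1}(ℝ)` agrees, up to a constant factor depending only on the dimension,
with Lebesgue measure on the region `|det g̃ - 1| < 1/2`. -/
theorem haar_measure_Kbar_upper_bound (n : ℕ) (hn : 1 ≤ n) (C : ℝ) (hC : 0 < C) :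
    ∃ c : ℝ, 0 < c ∧
      ∀ r : ℝ, 0 < r → r < 1 / 2 →
        volume (slChart n '' Kbar n r C) ≤
          ENNReal.ofReal
            (c * r ^ (((n + 1) ^ 2 + (n + 1) - 4) / 2 + 1) *
              Real.log (1 / r) ^ ((n + 1) * n / 2)) := by
  obtain ⟨B, hB, hcross⟩ := exists_volume_hyperbolicCross_mul_le hC
  refine ⟨(1 + C) ^ n * B ^ ((n + 1) * n / 2), by positivity, fun r hr hr2 => ?_⟩
  have hlog : 0 < log (1 / r) := log_pos (by rw [lt_div_iff₀ hr]; linarith)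
  rw [sq_add_sub_four_div_two_add_one hn]
  calc volume (slChart n '' Kbar n r C)
      ≤ ENNReal.ofReal ((1 + C) * r) ^ n *
          volume (hyperbolicCross (C * r)) ^ ((n + 1) * n / 2) :=
        Kbar.volume_slChart_image_le n r C
    _ ≤ ENNReal.ofReal ((1 + C) * r) ^ n *
          ENNReal.ofReal (B * r * log (1 / r)) ^ ((n + 1) * n / 2) := by
        gcongr
        exact hcross r hr hr2.le
    _ = _ := by
        rw [← ENNReal.ofReal_pow (by positivity), ← ENNReal.ofReal_pow (by positivity),
          ← ENNReal.ofReal_mul (by positivity), mul_pow, mul_pow, mul_pow, pow_add]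
        ring_nf
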